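/- arXiv:1808.08221 — 3 statements merged into one kernel-verified Lean document; each statement's English description precedes it below -/
import Mathlib

section
/- Let f be analytic on [−1,1] with an analytic continuation to the open Bernstein ellipse E_ρ of parameter ρ > 1, bounded there by |f(z)| ≤ M. Then the Chebyshev coefficients a_k of f satisfy |a_k| ≤ 2Mρ^{−k} for k ≥ 1 and |a_0| ≤ M. -/
open Complex Polynomial

/-- The open Bernstein ellipse of parameter `ρ`: image of the semi-open annulus
`1 ≤ |w| < ρ` under the Joukowski map `w ↦ (w + w⁻¹)/2`. -/
def bernsteinEllipse (ρ : ℝ) : Set ℂ :=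
  (fun w : ℂ => (w + w⁻¹) / 2) '' {w : ℂ | 1 ≤ ‖w‖ ∧ ‖w‖ < ρ}

/-!
With `J w = (w + w⁻¹) / 2`, the function `F = f ∘ J` is holomorphic and bounded by `M` on the
annulus `ρ⁻¹ < |w| < ρ`, because `J w = J w⁻¹`. On the unit circle `w = e^{iθ}` we have
`J w = cos θ` and `T_k (cos θ) = cos kθ`, so `∮_{|w|=1} w^{-k-1} F(w) dw` is `π i a_k`
(`2π i a_0` for `k = 0`), by orthogonality of `e^{inθ}`; the series may be integrated termwise
since `∑ |a_k| < ∞` (evaluate at `x = 1`). Moving the contour to `|w| = r < ρ` gives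
`π |a_k| ≤ 2π M r^{-k}`, and `r → ρ` finishes.
-/

open scoped Real
open Metric Set

noncomputable def joukowski (w : ℂ) : ℂ := (w + w⁻¹) / 2

lemma joukowski_inv (w : ℂ) : joukowski w⁻¹ = joukowski w := by
  rw [joukowski, joukowski, inv_inv, add_comm]

lemma mapsTo_joukowski_bernsteinEllipse (ρ : ℝ) :
    MapsTo joukowski (ball 0 ρ \ closedBall 0 ρ⁻¹) (bernsteinEllipse ρ) := by
  intro w ⟨h₂, h₁⟩
  rw [mem_ball_zero_iff] at h₂
  rw [mem_closedBall_zero_iff, not_le] at h₁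
  have hρ : 0 < ρ := (norm_nonneg w).trans_lt h₂
  rcases le_or_gt 1 ‖w‖ with hw | hw
  · exact ⟨w, ⟨hw, h₂⟩, rfl⟩
  · have hw₀ : 0 < ‖w‖ := (inv_pos.mpr hρ).trans h₁
    refine ⟨w⁻¹, ⟨?_, ?_⟩, joukowski_inv w⟩ <;> rw [norm_inv]
    · exact (one_le_inv₀ hw₀).mpr hw.le
    · exact (inv_lt_comm₀ hw₀ hρ).mpr h₁

lemma joukowski_exp_mul_I (θ : ℝ) : joukowski (exp (θ * I)) = cos θ := by
  rw [joukowski, cos, ← exp_neg, neg_mul]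

lemma differentiableAt_joukowski {w : ℂ} (hw : w ≠ 0) : DifferentiableAt ℂ joukowski w :=
  ((differentiableAt_id.add (differentiableAt_inv hw)).div_const 2 :)

lemma DifferentiableOn.comp_joukowski {f : ℂ → ℂ} {ρ : ℝ}
    (hf : DifferentiableOn ℂ f (bernsteinEllipse ρ)) :
    DifferentiableOn ℂ (f ∘ joukowski) (ball 0 ρ \ closedBall 0 ρ⁻¹) := by
  refine hf.comp (fun z hz => (differentiableAt_joukowski ?_).differentiableWithinAt)
    (mapsTo_joukowski_bernsteinEllipse ρ)
  rintro rfl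
  exact hz.2 (mem_closedBall_self (inv_nonneg.mpr (pos_of_mem_ball hz.1).le))

lemma circleIntegral_eq_of_differentiableOn_annulus {E : Type*} [NormedAddCommGroup E]
    [NormedSpace ℂ E] {F : ℂ → E} {r₀ R s r : ℝ}
    (hF : DifferentiableOn ℂ F (ball 0 R \ closedBall 0 r₀))
    (hs : 0 < s) (hr₀ : r₀ < s) (hsr : s ≤ r) (hr : r < R) :
    (∮ z in C(0, s), F z) = ∮ z in C(0, r), F z := by
  have hsub : closedBall (0 : ℂ) r \ ball 0 s ⊆ ball 0 R \ closedBall 0 r₀ :=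
    sdiff_subset_sdiff (closedBall_subset_ball hr) (closedBall_subset_ball hr₀)
  refine (circleIntegral_eq_of_differentiable_on_annulus_off_countable hs hsr countable_empty
    (hF.mono hsub).continuousOn fun z hz => hF.differentiableAt ?_).symm
  refine (isOpen_ball.sdiff isClosed_closedBall).mem_nhds (hsub ?_)
  exact sdiff_subset_sdiff ball_subset_closedBall ball_subset_closedBall hz.1

lemma norm_circleIntegral_zpow_mul_le {F : ℂ → ℂ} {r₀ R s r M : ℝ} (k : ℕ)
    (hF : DifferentiableOn ℂ F (ball 0 R \ closedBall 0 r₀))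
    (hFM : ∀ z ∈ ball 0 R \ closedBall 0 r₀, ‖F z‖ ≤ M)
    (hr₀ : 0 ≤ r₀) (hr₀s : r₀ < s) (hsr : s ≤ r) (hr : r < R) :
    ‖∮ z in C(0, s), z ^ (-(k : ℤ) - 1) * F z‖ ≤ 2 * π * M / r ^ k := by
  have hr_pos : 0 < r := hr₀.trans_lt (hr₀s.trans_le hsr)
  have hzpow : DifferentiableOn ℂ (fun z : ℂ => z ^ (-(k : ℤ) - 1)) (ball 0 R \ closedBall 0 r₀) :=
    fun z hz => (differentiableAt_zpow.mpr (Or.inl (ne_of_mem_of_not_mem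
      (mem_closedBall_self hr₀) hz.2).symm)).differentiableWithinAt
  rw [circleIntegral_eq_of_differentiableOn_annulus (F := fun z => z ^ (-(k : ℤ) - 1) * F z)
    (hzpow.mul hF) (hr₀.trans_lt hr₀s) hr₀s hsr hr]
  have hbound : ∀ z ∈ sphere (0 : ℂ) r, ‖z ^ (-(k : ℤ) - 1) * F z‖ ≤ M / r ^ (k + 1) := by
    intro z hz
    rw [mem_sphere_zero_iff_norm] at hz
    have hzA : z ∈ ball 0 R \ closedBall 0 r₀ := by
      simp only [mem_sdiff, mem_ball_zero_iff, mem_closedBall_zero_iff, hz, not_le]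
      exact ⟨hr, hr₀s.trans_le hsr⟩
    rw [norm_mul, norm_zpow, hz, show -(k : ℤ) - 1 = -((k + 1 : ℕ) : ℤ) by push_cast; ring,
      zpow_neg, zpow_natCast, inv_mul_eq_div]
    gcongr
    exact hFM z hzA
  calc _ ≤ 2 * π * r * (M / r ^ (k + 1)) :=
        circleIntegral.norm_integral_le_of_norm_le_const hr_pos.le hbound
    _ = 2 * π * M / r ^ k := by field_simp; ring

lemma circleIntegral_zpow_mul_comp_joukowski (F : ℂ → ℂ) (k : ℕ) :
    (∮ z in C(0, 1), z ^ (-(k : ℤ) - 1) * F (joukowski z)) =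
      I * ∫ θ in (0 : ℝ)..2 * π, F (cos θ) * exp (-(k * θ * I)) := by
  rw [circleIntegral, ← intervalIntegral.integral_const_mul]
  refine intervalIntegral.integral_congr fun θ _ => ?_
  simp only [deriv_circleMap, circleMap_zero, ofReal_one, one_mul, smul_eq_mul,
    joukowski_exp_mul_I, ← exp_int_mul]
  have hexp : exp (θ * I) * exp (((-(k : ℤ) - 1 : ℤ) : ℂ) * (θ * I)) = exp (-(k * θ * I)) := by
    rw [← exp_add]
    push_cast
    ring_nf
  linear_combination I * F (cos θ) * hexp

lemma integral_exp_int_mul_mul_I (n : ℤ) :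
    ∫ θ in (0 : ℝ)..2 * π, exp (n * θ * I) = if n = 0 then 2 * π else 0 := by
  split_ifs with hn
  · simp [hn]
  · have hc : (n * I : ℂ) ≠ 0 := by simp [hn, I_ne_zero]
    simp_rw [mul_right_comm _ _ I]
    have hperiod : exp (n * I * (2 * π)) = 1 := by
      rw [← exp_int_mul_two_pi_mul_I n]
      ring_nf
    simp [integral_exp_mul_complex hc, hperiod]

lemma integral_cos_nat_mul_mul_exp (j k : ℕ) :
    ∫ θ in (0 : ℝ)..2 * π, cos (j * θ) * exp (-(k * θ * I)) =
      if j = k then ((if k = 0 then 2 else 1) * π : ℂ) else 0 := by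
  have hsplit : ∀ θ : ℝ, cos (j * θ) * exp (-(k * θ * I)) =
      (exp (((j - k : ℤ) : ℂ) * θ * I) + exp (((-j - k : ℤ) : ℂ) * θ * I)) / 2 := by
    intro θ
    rw [cos, add_div, add_mul, div_mul_eq_mul_div, div_mul_eq_mul_div, ← exp_add, ← exp_add,
      ← add_div]
    push_cast
    ring_nf
  simp_rw [hsplit]
  rw [intervalIntegral.integral_div, intervalIntegral.integral_add
      (Continuous.intervalIntegrable (by fun_prop) _ _)
      (Continuous.intervalIntegrable (by fun_prop) _ _),
    integral_exp_int_mul_mul_I, integral_exp_int_mul_mul_I]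
  split_ifs <;> first | omega | push_cast; ring

lemma norm_cos_nat_mul_mul_exp_le (j k : ℕ) (θ : ℝ) :
    ‖cos (j * θ) * exp (-(k * θ * I))‖ ≤ 1 := by
  have hcos : cos (j * θ) = ((Real.cos (j * θ) : ℝ) : ℂ) := by rw [ofReal_cos]; push_cast; rfl
  have hexp : -(k * θ * I) = ((-(k * θ) : ℝ) : ℂ) * I := by push_cast; ring
  rw [norm_mul, hcos, hexp, norm_exp_ofReal_mul_I, mul_one, norm_real]
  exact Real.abs_cos_le_one _

lemma integral_mul_exp_of_hasSum_cos {a : ℕ → ℂ} {g : ℝ → ℂ} (ha : Summable fun j => ‖a j‖)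
    (hg : ∀ θ : ℝ, HasSum (fun j => a j * cos (j * θ)) (g θ)) (k : ℕ) :
    ∫ θ in (0 : ℝ)..2 * π, g θ * exp (-(k * θ * I)) = (if k = 0 then 2 else 1) * π * a k := by
  have hterms : HasSum (fun j => ∫ θ in (0 : ℝ)..2 * π, a j * (cos (j * θ) * exp (-(k * θ * I))))
      (∫ θ in (0 : ℝ)..2 * π, g θ * exp (-(k * θ * I))) := by
    refine intervalIntegral.hasSum_integral_of_dominated_convergence (fun j _ => ‖a j‖)
      (fun j => (Continuous.aestronglyMeasurable (by fun_prop)))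
      (fun j => .of_forall fun θ _ => ?_) (.of_forall fun _ _ => ha) intervalIntegrable_const
      (.of_forall fun θ _ => ?_)
    · rw [norm_mul]
      exact mul_le_of_le_one_right (norm_nonneg _) (norm_cos_nat_mul_mul_exp_le j k θ)
    · simpa only [mul_assoc] using (hg θ).mul_right (exp (-(k * θ * I)))
  simp only [intervalIntegral.integral_const_mul, integral_cos_nat_mul_mul_exp, mul_ite,
    mul_zero] at hterms
  rw [hterms.unique (hasSum_single k fun j hj => if_neg hj), if_pos rfl]
  ring

lemma summable_norm_of_hasSum_mul_eval_one_T {a : ℕ → ℂ} {s : ℂ}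
    (h : HasSum (fun k : ℕ => a k * (Chebyshev.T ℂ k).eval 1) s) : Summable fun k => ‖a k‖ := by
  simp only [Chebyshev.T_eval_one, mul_one] at h
  exact summable_norm_iff.mpr h.summable

lemma hasSum_mul_cos_of_hasSum_mul_eval_T {a : ℕ → ℂ} {f : ℂ → ℂ}
    (ha : ∀ x ∈ Icc (-1 : ℝ) 1, HasSum (fun k : ℕ => a k * (Chebyshev.T ℂ k).eval (x : ℂ)) (f x))
    (θ : ℝ) : HasSum (fun k : ℕ => a k * cos (k * θ)) (f (cos θ)) := by
  have h := ha (Real.cos θ) ⟨Real.neg_one_le_cos θ, Real.cos_le_one θ⟩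
  simpa only [ofReal_cos, Chebyshev.T_complex_cos, Int.cast_natCast] using h

lemma le_div_pow_of_forall_lt {x c ρ : ℝ} (k : ℕ) (hρ : 1 < ρ)
    (h : ∀ r, 1 ≤ r → r < ρ → x ≤ c / r ^ k) : x ≤ c / ρ ^ k := by
  have hcont : ContinuousAt (fun r : ℝ => c / r ^ k) ρ :=
    continuousAt_const.div (continuous_pow k).continuousAt (pow_ne_zero k (by linarith))
  refine ge_of_tendsto (hcont.tendsto.mono_left (nhdsWithin_le_nhds (s := Iio ρ))) ?_
  filter_upwards [Ioo_mem_nhdsLT hρ] with r hr using h r hr.1.le hr.2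

theorem chebyshev_coeff_bound_of_analytic_general (ρ M : ℝ) (hρ : 1 < ρ)
    (f : ℂ → ℂ) (hf : DifferentiableOn ℂ f (bernsteinEllipse ρ))
    (hbound : ∀ z ∈ bernsteinEllipse ρ, ‖f z‖ ≤ M)
    (a : ℕ → ℂ)
    (ha : ∀ x ∈ Set.Icc (-1 : ℝ) 1,
      HasSum (fun k : ℕ => a k * (Polynomial.Chebyshev.T ℂ k).eval (x : ℂ)) (f x)) :
    ‖a 0‖ ≤ M ∧
      ∀ k : ℕ, 1 ≤ k → ‖a k‖ ≤ 2 * M * ρ ^ (-(k : ℤ)) := by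
  have hsum : Summable fun k => ‖a k‖ :=
    summable_norm_of_hasSum_mul_eval_one_T (by simpa only [ofReal_one] using ha 1 (by simp))
  have hcoeff (k : ℕ) : (∮ z in C(0, 1), z ^ (-(k : ℤ) - 1) * (f ∘ joukowski) z) =
      I * ((if k = 0 then 2 else 1) * π * a k) := by
    rw [Function.comp_def, circleIntegral_zpow_mul_comp_joukowski,
      integral_mul_exp_of_hasSum_cos hsum (hasSum_mul_cos_of_hasSum_mul_eval_T ha)]
  have hest (k : ℕ) (r : ℝ) (h₁ : 1 ≤ r) (h₂ : r < ρ) :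
      ‖(if k = 0 then 2 else 1) * π * a k‖ ≤ 2 * π * M / r ^ k := by
    have h := norm_circleIntegral_zpow_mul_le k hf.comp_joukowski
      (fun z hz => hbound _ (mapsTo_joukowski_bernsteinEllipse ρ hz)) (inv_nonneg.mpr (by linarith))
      (inv_lt_one_of_one_lt₀ hρ) h₁ h₂
    rwa [hcoeff, norm_mul, norm_I, one_mul] at h
  constructor
  · have h := hest 0 1 le_rfl hρ
    simp only [if_pos, norm_mul, norm_ofNat, norm_real, Real.norm_of_nonneg Real.pi_pos.le] at h
    exact le_of_mul_le_mul_left (h.trans_eq (by ring)) (by positivity)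
  · intro k hk
    have h := hest k
    simp only [if_neg (by omega : k ≠ 0), one_mul, norm_mul, norm_real,
      Real.norm_of_nonneg Real.pi_pos.le] at h
    rw [zpow_neg, zpow_natCast, ← div_eq_mul_inv]
    exact le_div_pow_of_forall_lt k hρ fun r h₁ h₂ =>
      le_of_mul_le_mul_left ((h r h₁ h₂).trans_eq (by ring)) Real.pi_pos

theorem chebyshev_coeff_bound_of_analytic (ρ M : ℝ) (hρ : 1 < ρ) (hM : 0 ≤ M)
    (f : ℂ → ℂ) (hf : DifferentiableOn ℂ f (bernsteinEllipse ρ))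
    (hbound : ∀ z ∈ bernsteinEllipse ρ, ‖f z‖ ≤ M)
    (a : ℕ → ℂ)
    (ha : ∀ x ∈ Set.Icc (-1 : ℝ) 1,
      HasSum (fun k : ℕ => a k * (Polynomial.Chebyshev.T ℂ k).eval (x : ℂ)) (f x)) :
    ‖a 0‖ ≤ M ∧
      ∀ k : ℕ, 1 ≤ k → ‖a k‖ ≤ 2 * M * ρ ^ (-(k : ℤ)) :=
  chebyshev_coeff_bound_of_analytic_general ρ M hρ f hf hbound a ha
end

section
/- Let p(x) denote the simplified barycentric formula at Chebyshev points: p(x) = Σ'_{j=0}^n (−1)^j v_j/(x−x_j) / Σ'_{j=0}^n (−1)^j/(x−x_j) with x_j = cos(jπ/n). Then for each node x_i, the limit of p(x) as x → x_i (with x off the grid) equals v_i. -/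
/-!
Multiplying numerator and denominator of the barycentric quotient by `x - xᵢ` turns every term
`wⱼ / (x - xⱼ)` into `wⱼ (x - xᵢ) / (x - xⱼ)`, which tends to `wᵢ` for `j = i` and to `0` for
`j ≠ i`, the nodes being distinct. Hence the quotient tends to `wᵢ vᵢ / wᵢ = vᵢ`; for the
Chebyshev points `cos (jπ/n)` the nodes are distinct because `cos` is injective on `[0, π]`.
-/

open Real Finset Filter Topology

section Barycentric

variable {𝕜 ι : Type*} [Field 𝕜] [TopologicalSpace 𝕜]

theorem tendsto_sub_div_sub_self_nhdsNE (a : 𝕜) :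
    Tendsto (fun x => (x - a) / (x - a)) (𝓝[≠] a) (𝓝 1) :=
  tendsto_const_nhds.congr' <| eventually_nhdsWithin_of_forall fun _ hx =>
    (div_self (sub_ne_zero.2 hx)).symm

variable [IsTopologicalRing 𝕜] [ContinuousInv₀ 𝕜]

theorem tendsto_sub_div_sub_nhds_of_ne {a b : 𝕜} (hab : a ≠ b) :
    Tendsto (fun x => (x - a) / (x - b)) (𝓝 a) (𝓝 0) := by
  have h := (tendsto_id.sub_const a).div (tendsto_id.sub_const b) (sub_ne_zero.2 hab)
  rwa [sub_self, zero_div] at h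

theorem tendsto_sum_mul_sub_div_sub_nhdsNE {s : Finset ι} {t : ι → 𝕜} (ht : Set.InjOn t s)
    (c : ι → 𝕜) {i : ι} (hi : i ∈ s) :
    Tendsto (fun x => ∑ j ∈ s, c j * ((x - t i) / (x - t j))) (𝓝[≠] t i) (𝓝 (c i)) := by
  classical
  have h := tendsto_finsetSum s fun j (hj : j ∈ s) =>
    show Tendsto (fun x => c j * ((x - t i) / (x - t j))) (𝓝[≠] t i)
      (𝓝 (if i = j then c j else 0)) by
    split_ifs with hij
    · subst hij
      simpa using (tendsto_sub_div_sub_self_nhdsNE (t i)).const_mul (c i)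
    · simpa using ((tendsto_sub_div_sub_nhds_of_ne fun h => hij (ht hi hj h)).const_mul
        (c j)).mono_left nhdsWithin_le_nhds
  rwa [sum_ite_eq s i, if_pos hi] at h

theorem tendsto_barycentric_nhdsNE_node {s : Finset ι} {t : ι → 𝕜} (ht : Set.InjOn t s)
    (w v : ι → 𝕜) {i : ι} (hi : i ∈ s) (hwi : w i ≠ 0) :
    Tendsto (fun x => (∑ j ∈ s, w j * v j / (x - t j)) / ∑ j ∈ s, w j / (x - t j))
      (𝓝[≠] t i) (𝓝 (v i)) := by
  have h := (tendsto_sum_mul_sub_div_sub_nhdsNE ht (fun j => w j * v j) hi).div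
    (tendsto_sum_mul_sub_div_sub_nhdsNE ht w hi) hwi
  rw [mul_div_cancel_left₀ _ hwi] at h
  refine h.congr' ?_
  filter_upwards [self_mem_nhdsWithin] with x hx
  rw [Pi.div_apply, ← mul_div_mul_right (∑ j ∈ s, w j * v j / (x - t j)) _ (sub_ne_zero.2 hx),
    sum_mul, sum_mul]
  congr 1 <;> exact sum_congr rfl fun j _ => by ring

end Barycentric

theorem injOn_cos_natCast_mul_pi_div (n : ℕ) :
    Set.InjOn (fun j : ℕ => cos (j * π / n)) (range (n + 1) : Set ℕ) := by
  intro j hj k hk hjk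
  simp only [coe_range, Set.mem_Iio, Nat.lt_succ_iff] at hj hk
  rcases eq_or_ne n 0 with rfl | hn
  · omega
  have hn' : (0 : ℝ) < n := by exact_mod_cast hn.bot_lt
  have mem : ∀ m ≤ n, (m : ℝ) * π / n ∈ Set.Icc 0 π := fun m hm =>
    ⟨by positivity, div_le_of_le_mul₀ hn'.le pi_pos.le
      (by rw [mul_comm]; gcongr)⟩
  have := injOn_cos (mem j hj) (mem k hk) hjk
  rw [div_left_inj' hn'.ne', mul_left_inj' pi_ne_zero] at this
  exact_mod_cast this

theorem barycentric_formula_tendsto_node_value_general (n : ℕ) (v : ℕ → ℝ)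
    (i : ℕ) (hi : i ≤ n) :
    Filter.Tendsto
      (fun x : ℝ =>
        (∑ j ∈ Finset.range (n + 1),
            (if j = 0 ∨ j = n then (1 / 2 : ℝ) else 1) * ((-1 : ℝ) ^ j * v j) /
              (x - Real.cos (j * Real.pi / n))) /
          (∑ j ∈ Finset.range (n + 1),
            (if j = 0 ∨ j = n then (1 / 2 : ℝ) else 1) * (-1 : ℝ) ^ j /
              (x - Real.cos (j * Real.pi / n))))
      (nhdsWithin (Real.cos (i * Real.pi / n))
        {x : ℝ | x ∈ Set.Ioo (-1 : ℝ) 1 ∧ ∀ j ≤ n, x ≠ Real.cos (j * Real.pi / n)})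
      (nhds (v i)) := by
  have hwi : (if i = 0 ∨ i = n then (1 / 2 : ℝ) else 1) * (-1) ^ i ≠ 0 := by
    split_ifs <;> simp
  have h := tendsto_barycentric_nhdsNE_node (injOn_cos_natCast_mul_pi_div n)
    (fun j => (if j = 0 ∨ j = n then (1 / 2 : ℝ) else 1) * (-1) ^ j) v
    (mem_range_succ_iff.2 hi) hwi
  simp only [mul_assoc] at h
  exact h.mono_left (nhdsWithin_mono _ fun x hx => hx.2 i hi)

theorem barycentric_formula_tendsto_node_value (n : ℕ) (hn : 1 ≤ n) (v : ℕ → ℝ)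
    (i : ℕ) (hi : i ≤ n) :
    Filter.Tendsto
      (fun x : ℝ =>
        (∑ j ∈ Finset.range (n + 1),
            (if j = 0 ∨ j = n then (1 / 2 : ℝ) else 1) * ((-1 : ℝ) ^ j * v j) /
              (x - Real.cos (j * Real.pi / n))) /
          (∑ j ∈ Finset.range (n + 1),
            (if j = 0 ∨ j = n then (1 / 2 : ℝ) else 1) * (-1 : ℝ) ^ j /
              (x - Real.cos (j * Real.pi / n))))
      (nhdsWithin (Real.cos (i * Real.pi / n))
        {x : ℝ | x ∈ Set.Ioo (-1 : ℝ) 1 ∧ ∀ j ≤ n, x ≠ Real.cos (j * Real.pi / n)})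
      (nhds (v i)) :=
  barycentric_formula_tendsto_node_value_general n v i hi
end

section
/- For x ∈ (−1,1) not equal to any Chebyshev point x_j = cos(jπ/n), the denominator Σ'_{j=0}^n (−1)^j/(x − x_j) of the barycentric formula is nonzero. -/
open Real Finset

private lemma alt_bounds (m : ℕ) (a : ℕ → ℝ)
    (hmono : ∀ i j, i ≤ j → j ≤ m → a j ≤ a i) (hlast : 0 ≤ a m) :
    0 ≤ ∑ i ∈ Finset.range (m + 1), (-1 : ℝ) ^ i * a i ∧
      ∑ i ∈ Finset.range (m + 1), (-1 : ℝ) ^ i * a i ≤ a 0 := by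
  induction m generalizing a with
  | zero => simpa using hlast
  | succ m ih =>
    obtain ⟨h1, h2⟩ := ih (fun i => a (i + 1))
      (fun i j hij hj => hmono (i + 1) (j + 1) (by omega) (by omega)) hlast
    have hrw : ∑ i ∈ Finset.range (m + 1 + 1), (-1 : ℝ) ^ i * a i
        = a 0 - ∑ i ∈ Finset.range (m + 1), (-1 : ℝ) ^ i * a (i + 1) := by
      rw [Finset.sum_range_succ']
      have : ∀ i ∈ Finset.range (m + 1),
          (-1 : ℝ) ^ (i + 1) * a (i + 1) = -((-1 : ℝ) ^ i * a (i + 1)) := by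
        intro i _; ring
      rw [Finset.sum_congr rfl this, Finset.sum_neg_distrib]
      ring
    have ha10 : a 1 ≤ a 0 := hmono 0 1 (by omega) (by omega)
    constructor <;> (rw [hrw]; dsimp at h1 h2; linarith)

private lemma alt_pos (m : ℕ) (a : ℕ → ℝ)
    (hmono : ∀ i j, i ≤ j → j ≤ m → a j ≤ a i) (hlast : 0 ≤ a m)
    (h0 : 0 < a 0) (hstrict : m = 0 ∨ a 1 < a 0) :
    0 < ∑ i ∈ Finset.range (m + 1), (-1 : ℝ) ^ i * a i := by
  cases m with
  | zero => simpa using h0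
  | succ m =>
    have ha1 : a 1 < a 0 := hstrict.resolve_left (by omega)
    obtain ⟨h1, h2⟩ := alt_bounds m (fun i => a (i + 1))
      (fun i j hij hj => hmono (i + 1) (j + 1) (by omega) (by omega)) hlast
    have hrw : ∑ i ∈ Finset.range (m + 1 + 1), (-1 : ℝ) ^ i * a i
        = a 0 - ∑ i ∈ Finset.range (m + 1), (-1 : ℝ) ^ i * a (i + 1) := by
      rw [Finset.sum_range_succ']
      have : ∀ i ∈ Finset.range (m + 1),
          (-1 : ℝ) ^ (i + 1) * a (i + 1) = -((-1 : ℝ) ^ i * a (i + 1)) := by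
        intro i _; ring
      rw [Finset.sum_congr rfl this, Finset.sum_neg_distrib]
      ring
    rw [hrw]; dsimp at h1 h2; linarith

theorem barycentric_denominator_ne_zero (n : ℕ) (hn : 1 ≤ n) (x : ℝ)
    (hx : x ∈ Set.Ioo (-1 : ℝ) 1)
    (hnode : ∀ j ≤ n, x ≠ Real.cos (j * Real.pi / n)) :
    (∑ j ∈ Finset.range (n + 1),
        (if j = 0 ∨ j = n then (1 / 2 : ℝ) else 1) * (-1 : ℝ) ^ j /
          (x - Real.cos (j * Real.pi / n))) ≠ 0 := by
  obtain ⟨hx1, hx2⟩ := hx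
  have hpi : (0:ℝ) < π := Real.pi_pos
  have hn0 : (0:ℝ) < (n:ℝ) := by exact_mod_cast hn
  set θ := Real.arccos x with hθdef
  have hcosθ : Real.cos θ = x := Real.cos_arccos (le_of_lt hx1) (le_of_lt hx2)
  have hθ0 : 0 < θ := Real.arccos_pos.mpr hx2
  have hθπ : θ < π := by
    refine lt_of_le_of_ne (Real.arccos_le_pi x) (fun h => ?_)
    rw [h, Real.cos_pi] at hcosθ
    linarith
  set k := ⌊(n:ℝ) * θ / π⌋₊ with hkdef
  have hfl : ((k:ℝ)) ≤ (n:ℝ) * θ / π := Nat.floor_le (by positivity)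
  have hfu : (n:ℝ) * θ / π < (k:ℝ) + 1 := Nat.lt_floor_add_one _
  have hkn : k < n := by
    rw [hkdef, Nat.floor_lt (by positivity)]
    rw [div_lt_iff₀ hpi]
    nlinarith
  -- θ is strictly between the k-th and (k+1)-th node angles
  have hθne : ∀ j : ℕ, j ≤ n → θ ≠ (j:ℝ) * π / (n:ℝ) := by
    intro j hj h
    exact hnode j hj (by rw [← hcosθ, h])
  have hkl : (k:ℝ) * π / (n:ℝ) < θ := by
    refine lt_of_le_of_ne ?_ (fun h => hθne k (le_of_lt hkn) h.symm)
    rw [div_le_iff₀ hn0]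
    have h1 : (k:ℝ) * π ≤ (n:ℝ) * θ := (le_div_iff₀ hpi).mp hfl
    nlinarith
  have hku : θ < ((k:ℝ) + 1) * π / (n:ℝ) := by
    rw [lt_div_iff₀ hn0]
    have : (n:ℝ) * θ < ((k:ℝ) + 1) * π := by
      rw [div_lt_iff₀ hpi] at hfu; nlinarith
    nlinarith
  -- node values vs x
  have hgt : ∀ j : ℕ, j ≤ k → x < Real.cos ((j:ℝ) * π / (n:ℝ)) := by
    intro j hj
    rw [← hcosθ]
    apply Real.cos_lt_cos_of_nonneg_of_le_pi (by positivity) (le_of_lt hθπ)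
    refine lt_of_le_of_lt ?_ hkl
    have : (j:ℝ) ≤ (k:ℝ) := by exact_mod_cast hj
    gcongr
  have hlt : ∀ j : ℕ, k < j → j ≤ n → Real.cos ((j:ℝ) * π / (n:ℝ)) < x := by
    intro j h1 h2
    rw [← hcosθ]
    apply Real.cos_lt_cos_of_nonneg_of_le_pi (le_of_lt hθ0)
    · rw [div_le_iff₀ hn0]
      have : (j:ℝ) ≤ (n:ℝ) := by exact_mod_cast h2
      nlinarith
    · refine lt_of_lt_of_le hku ?_
      have : (k:ℝ) + 1 ≤ (j:ℝ) := by exact_mod_cast h1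
      gcongr
  have hmonoX : ∀ i j : ℕ, i < j → j ≤ n →
      Real.cos ((j:ℝ) * π / (n:ℝ)) < Real.cos ((i:ℝ) * π / (n:ℝ)) := by
    intro i j h1 h2
    apply Real.cos_lt_cos_of_nonneg_of_le_pi (by positivity)
    · rw [div_le_iff₀ hn0]
      have : (j:ℝ) ≤ (n:ℝ) := by exact_mod_cast h2
      nlinarith
    · have : (i:ℝ) < (j:ℝ) := by exact_mod_cast h1
      gcongr
  -- abbreviations
  set X : ℕ → ℝ := fun j => Real.cos ((j:ℝ) * π / (n:ℝ)) with hXdef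
  set δ : ℕ → ℝ := fun j => if j = 0 ∨ j = n then (1/2:ℝ) else 1 with hδdef
  have hδpos : ∀ j, 0 < δ j := by
    intro j; rw [hδdef]; dsimp only; split_ifs <;> norm_num
  have hδle : ∀ j, δ j ≤ 1 := by
    intro j; rw [hδdef]; dsimp only; split_ifs <;> norm_num
  have hδ1 : ∀ j, 0 < j → j < n → δ j = 1 := by
    intro j h1 h2; rw [hδdef]; dsimp only; rw [if_neg (by omega)]
  set t : ℕ → ℝ := fun j => δ j * (-1:ℝ) ^ j / (x - X j) with htdef
  show (∑ j ∈ Finset.range (n + 1), t j) ≠ 0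
  set a : ℕ → ℝ := fun i => δ (k - i) / (X (k - i) - x) with hadef
  set b : ℕ → ℝ := fun i => δ (k + 1 + i) / (x - X (k + 1 + i)) with hbdef
  -- a facts
  have haval : ∀ i, a i = δ (k - i) / (X (k - i) - x) := fun i => rfl
  have hapos : ∀ i, 0 < a i := by
    intro i
    exact div_pos (hδpos _) (sub_pos.mpr (hgt (k - i) (by omega)))
  have hastrict : ∀ i j : ℕ, i < j → j ≤ k → a j < a i := by
    intro i j h1 h2
    have hij : k - j < k - i := by omega
    have hik : 0 < k - i := by omega
    have hDi : 0 < X (k - i) - x := sub_pos.mpr (hgt (k - i) (by omega))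
    have hDj : 0 < X (k - j) - x := sub_pos.mpr (hgt (k - j) (by omega))
    have hDij : X (k - i) - x < X (k - j) - x := by
      have := hmonoX (k - j) (k - i) hij (by omega)
      linarith
    calc a j = δ (k - j) / (X (k - j) - x) := rfl
      _ ≤ 1 / (X (k - j) - x) := by gcongr; exact hδle _
      _ < 1 / (X (k - i) - x) := one_div_lt_one_div_of_lt hDi hDij
      _ = a i := by rw [haval, hδ1 (k - i) hik (by omega)]
  -- b facts
  have hbpos : ∀ i, i ≤ n - k - 1 → 0 < b i := by
    intro i hi
    exact div_pos (hδpos _) (sub_pos.mpr (hlt (k+1+i) (by omega) (by omega)))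
  have hbmono : ∀ i j : ℕ, i ≤ j → j ≤ n - k - 1 → b j ≤ b i := by
    intro i j h1 h2
    rcases eq_or_lt_of_le h1 with rfl | h1
    · exact le_rfl
    have hDi : 0 < x - X (k+1+i) := sub_pos.mpr (hlt (k+1+i) (by omega) (by omega))
    have hDj : 0 < x - X (k+1+j) := sub_pos.mpr (hlt (k+1+j) (by omega) (by omega))
    have hDij : x - X (k+1+i) < x - X (k+1+j) := by
      have := hmonoX (k+1+i) (k+1+j) (by omega) (by omega)
      linarith
    calc b j = δ (k+1+j) / (x - X (k+1+j)) := rfl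
      _ ≤ 1 / (x - X (k+1+j)) := by gcongr; exact hδle _
      _ ≤ 1 / (x - X (k+1+i)) := one_div_le_one_div_of_le hDi (le_of_lt hDij)
      _ = b i := by
          rw [hbdef]; dsimp only; rw [hδ1 (k+1+i) (by omega) (by omega)]
  -- assembly
  suffices h : 0 < (-1:ℝ)^(k+1) * ∑ j ∈ Finset.range (n+1), t j by
    intro h0
    rw [h0, mul_zero] at h
    exact lt_irrefl 0 h
  have hsplit : n + 1 = (k + 1) + (n - k) := by omega
  rw [hsplit, Finset.sum_range_add, mul_add]
  have hleftsum : ∑ j ∈ Finset.range (k+1), t j = ∑ i ∈ Finset.range (k+1), t (k - i) := by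
    rw [← Finset.sum_range_reflect t (k+1)]
    exact Finset.sum_congr rfl (fun i hi => rfl)
  rw [hleftsum, Finset.mul_sum, Finset.mul_sum]
  have hleft : ∀ i ∈ Finset.range (k+1), (-1:ℝ)^(k+1) * t (k - i) = (-1:ℝ)^i * a i := by
    intro i hi
    rw [Finset.mem_range] at hi
    have hpow : (-1:ℝ)^(k+1) * (-1:ℝ)^(k - i) = -(-1:ℝ)^i := by
      rw [← pow_add]
      have he : k + 1 + (k - i) = 2 * (k - i) + i + 1 := by omega
      rw [he, pow_add, pow_add, pow_mul]
      norm_num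
    have h1 : (-1:ℝ)^(k+1) * t (k - i)
        = ((-1:ℝ)^(k+1) * (-1:ℝ)^(k - i)) * (δ (k - i) / (x - X (k - i))) := by
      rw [htdef]; dsimp only; ring
    rw [h1, hpow, show x - X (k - i) = -(X (k - i) - x) from by ring, div_neg, haval]
    ring
  rw [Finset.sum_congr rfl hleft]
  have hright : ∀ i ∈ Finset.range (n - k), (-1:ℝ)^(k+1) * t (k + 1 + i) = (-1:ℝ)^i * b i := by
    intro i _
    have hpow : (-1:ℝ)^(k+1) * (-1:ℝ)^(k+1+i) = (-1:ℝ)^i := by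
      rw [← pow_add]
      have he : k + 1 + (k + 1 + i) = 2 * (k + 1) + i := by omega
      rw [he, pow_add, pow_mul]
      norm_num
    have h1 : (-1:ℝ)^(k+1) * t (k+1+i)
        = ((-1:ℝ)^(k+1) * (-1:ℝ)^(k+1+i)) * (δ (k+1+i) / (x - X (k+1+i))) := by
      rw [htdef]; dsimp only; ring
    rw [h1, hpow]
  rw [Finset.sum_congr rfl hright]
  have hL : 0 < ∑ i ∈ Finset.range (k+1), (-1:ℝ)^i * a i := by
    refine alt_pos k a (fun i j hij hj => ?_) (hapos k).le (hapos 0) ?_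
    · rcases eq_or_lt_of_le hij with rfl | h
      · exact le_rfl
      · exact (hastrict i j h hj).le
    · rcases Nat.eq_zero_or_pos k with hk0 | hk0
      · exact Or.inl hk0
      · exact Or.inr (hastrict 0 1 Nat.zero_lt_one (by omega))
  have hR : 0 ≤ ∑ i ∈ Finset.range (n - k), (-1:ℝ)^i * b i := by
    have hnk : n - k = (n - k - 1) + 1 := by omega
    rw [hnk]
    exact (alt_bounds (n - k - 1) b hbmono (hbpos _ le_rfl).le).1
  linarith
end
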